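/- arXiv:math/0503045 — 2 statements merged into one kernel-verified Lean document; each statement's English description precedes it below -/
import Mathlib

section
/- Suppose the group Γ has the factorization property. Let G be a finitely generated group and let R_1 < R_2 < R_3 < ⋯ be a strictly increasing sequence of Γ-limit quotients of G (that is, R_{m+1} > R_m for every m). Then there exists a Γ-limit quotient R of G such that R > R_m for every m. -/
open Filter

universe uG

/-- A sequence of homomorphisms `h : ℕ → G →* Γ` is *stable* if for every `g ∈ G`,
either `h n g = 1` for all but finitely many `n`, or `h n g ≠ 1` for all but
finitely many `n`. -/
def StableSeq {G Γ : Type*} [Group G] [Group Γ] (h : ℕ → G →* Γ) : Prop :=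
  ∀ g : G, (∀ᶠ n in atTop, h n g = 1) ∨ (∀ᶠ n in atTop, h n g ≠ 1)

/-- The *stable kernel* of a sequence of homomorphisms: the set of `g ∈ G` such that
`h n g = 1` for all but finitely many `n`.  It is always a subgroup. -/
def stableKer {G Γ : Type*} [Group G] [Group Γ] (h : ℕ → G →* Γ) : Subgroup G where
  carrier := { g | ∀ᶠ n in atTop, h n g = 1 }
  one_mem' := Eventually.of_forall fun n => map_one (h n)
  mul_mem' := fun ha hb => (ha.and hb).mono fun n hn => by
    simp only [map_mul, hn.1, hn.2, one_mul]
  inv_mem' := fun ha => ha.mono fun n hn => by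
    simp only [map_inv, hn, inv_one]

instance stableKer_normal {G Γ : Type*} [Group G] [Group Γ] (h : ℕ → G →* Γ) :
    (stableKer h).Normal where
  conj_mem := fun x hx g => hx.mono fun n hn => by
    simp only [map_mul, map_inv, hn, mul_one, mul_inv_cancel]

/-- `q : G →* L` is a `Γ`-limit quotient of `G` if it is surjective and its kernel
is the stable kernel of some stable sequence of homomorphisms `G →* Γ`. -/
def IsLimitQuotient (Γ : Type*) [Group Γ] {G L : Type*} [Group G] [Group L]
    (q : G →* L) : Prop :=
  Function.Surjective q ∧ ∃ h : ℕ → G →* Γ, StableSeq h ∧ q.ker = stableKer h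

/-- `L` is a `Γ`-limit group if it is (isomorphic to) a `Γ`-limit quotient of some
finitely generated group. -/
def IsLimitGroup (Γ : Type*) [Group Γ] (L : Type*) [Group L] : Prop :=
  ∃ (G : GrpCat.{uG}) (q : G →* L), Group.FG G ∧ IsLimitQuotient Γ q

/-- The strict order on limit quotients of a fixed group `G`: `R₁ > R₂` iff there is an
epimorphism `τ : R₁ → R₂` with nontrivial kernel such that `q₂ = τ ∘ q₁`. -/
def QuotGT {G R₁ R₂ : Type*} [Group G] [Group R₁] [Group R₂]
    (q₁ : G →* R₁) (q₂ : G →* R₂) : Prop :=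
  ∃ τ : R₁ →* R₂, Function.Surjective τ ∧ τ.ker ≠ ⊥ ∧ q₂ = τ.comp q₁

/-- Two quotients of `G` are equivalent if they differ by an isomorphism commuting with the
quotient maps. -/
def QuotEquiv {G R₁ R₂ : Type*} [Group G] [Group R₁] [Group R₂]
    (q₁ : G →* R₁) (q₂ : G →* R₂) : Prop :=
  ∃ τ : R₁ ≃* R₂, ∀ g : G, τ (q₁ g) = q₂ g

/-- `G` is fully residually `Γ` if every finite subset of `G` is mapped injectively by
some homomorphism `G →* Γ`. -/
def FullyResidually (Γ : Type*) [Group Γ] (G : Type*) [Group G] : Prop :=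
  ∀ F : Finset G, ∃ h : G →* Γ, Set.InjOn h ↑F

/-- `Γ` has the *factorization property* if for every finitely generated group `H` and every
stable sequence `h : ℕ → H →* Γ` with stable kernel `K`, some subsequence of `h` consists of
homomorphisms factoring through `H ⧸ K`. -/
def FactorizationProperty (Γ : Type*) [Group Γ] : Prop :=
  ∀ (H : GrpCat.{uG}), Group.FG H → ∀ h : ℕ → H →* Γ, StableSeq h →
    ∃ φ : ℕ → ℕ, StrictMono φ ∧ ∀ t : ℕ,
      ∃ π : (H ⧸ stableKer h) →* Γ, h (φ t) = π.comp (QuotientGroup.mk' (stableKer h))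

/-!
Let `K m` be the kernel of `η m`, the stable kernel of a stable sequence `h m`. Because `G` is
countable, a diagonal sequence `f m := h m (N m)`, with `N m` chosen so that `h m (N m)` already
decides membership in `K m` for the first `m` elements of an enumeration of `G`, has stable kernel
`⋂ K m`; the `K m` decrease, which is what makes `f` stable. The image of `G` in `∏ R m` is therefore
a limit quotient, and it lies strictly above every `R m` since `⋂ K m ≤ K (m + 1) < K m`.
-/

theorem Group.FG.countable (G : Type*) [Group G] [Group.FG G] : Countable G := by
  obtain ⟨α, _, φ, hφ⟩ := Group.fg_iff_exists_freeGroup_hom_surjective_finite.mp ‹Group.FG G›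
  exact hφ.countable

theorem MonoidHom.ker_pi {G ι : Type*} [Group G] {R : ι → Type*} [∀ i, Group (R i)]
    (η : ∀ i, G →* R i) : (MonoidHom.pi η).ker = ⨅ i, (η i).ker := by
  ext g
  simp [MonoidHom.mem_ker, Subgroup.mem_iInf, funext_iff]

section StableKernel

variable {G Γ : Type*} [Group G] [Group Γ]

theorem mem_stableKer {h : ℕ → G →* Γ} {g : G} :
    g ∈ stableKer h ↔ ∀ᶠ n in atTop, h n g = 1 :=
  Iff.rfl

theorem StableSeq.eventually_apply_eq_one_iff {h : ℕ → G →* Γ} (hh : StableSeq h) (g : G) :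
    ∀ᶠ n in atTop, (h n g = 1 ↔ g ∈ stableKer h) := by
  rcases hh g with hone | hne
  · exact hone.mono fun n hn => iff_of_true hn hone
  · have hg : g ∉ stableKer h := fun hone =>
      (hone.and hne).exists.elim fun _ hn => hn.2 hn.1
    exact hne.mono fun n hn => iff_of_false hn hg

theorem exists_eventually_apply_eq_one_iff_mem_stableKer [Countable G] {h : ℕ → ℕ → G →* Γ}
    (hh : ∀ m, StableSeq (h m)) :
    ∃ f : ℕ → G →* Γ, ∀ g, ∀ᶠ m in atTop, (f m g = 1 ↔ g ∈ stableKer (h m)) := by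
  obtain ⟨e, he⟩ := exists_surjective_nat G
  have hN : ∀ m, ∃ n, ∀ i ∈ Finset.range (m + 1), (h m n (e i) = 1 ↔ e i ∈ stableKer (h m)) :=
    fun m => ((Finset.range (m + 1)).eventually_all.2 fun i _ =>
      (hh m).eventually_apply_eq_one_iff (e i)).exists
  choose N hN using hN
  refine ⟨fun m => h m (N m), fun g => ?_⟩
  obtain ⟨i, rfl⟩ := he g
  filter_upwards [eventually_ge_atTop i] with m hm
  exact hN m i (Finset.mem_range_succ_iff.2 hm)

theorem exists_stableSeq_stableKer_eq_iInf [Countable G] {h : ℕ → ℕ → G →* Γ}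
    (hh : ∀ m, StableSeq (h m)) (hanti : Antitone fun m => stableKer (h m)) :
    ∃ f : ℕ → G →* Γ, StableSeq f ∧ stableKer f = ⨅ m, stableKer (h m) := by
  obtain ⟨f, hf⟩ := exists_eventually_apply_eq_one_iff_mem_stableKer hh
  have hmem : ∀ g ∈ ⨅ m, stableKer (h m), ∀ᶠ m in atTop, f m g = 1 := fun g hg =>
    (hf g).mono fun m hm => hm.2 (Subgroup.mem_iInf.1 hg m)
  have hnmem : ∀ g ∉ ⨅ m, stableKer (h m), ∀ᶠ m in atTop, f m g ≠ 1 := by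
    intro g hg
    obtain ⟨m₀, hm₀⟩ := not_forall.1 (mt Subgroup.mem_iInf.2 hg)
    filter_upwards [hf g, eventually_ge_atTop m₀] with m hm hle
    exact fun hone => hm₀ (hanti hle (hm.1 hone))
  refine ⟨f, fun g => (em _).imp (hmem g) (hnmem g), le_antisymm (fun g hg => ?_) hmem⟩
  by_contra hg'
  obtain ⟨_, hone, hne⟩ := ((mem_stableKer.1 hg).and (hnmem g hg')).exists
  exact hne hone

end StableKernel

theorem quotGT_iff_ker_lt {G R₁ R₂ : Type*} [Group G] [Group R₁] [Group R₂]
    {q₁ : G →* R₁} {q₂ : G →* R₂} (hq₁ : Function.Surjective q₁) (hq₂ : Function.Surjective q₂) :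
    QuotGT q₁ q₂ ↔ q₁.ker < q₂.ker := by
  constructor
  · rintro ⟨τ, -, hτ, rfl⟩
    obtain ⟨⟨x, hx⟩, hx1⟩ := Subgroup.ne_bot_iff_exists_ne_one.1 hτ
    obtain ⟨g, rfl⟩ := hq₁ x
    refine lt_of_le_of_ne (MonoidHom.comap_ker τ q₁ ▸ MonoidHom.ker_le_comap q₁ _) fun heq => ?_
    have hg : g ∈ q₁.ker := by rw [heq]; exact hx
    exact hx1 (Subtype.ext hg)
  · intro hlt
    let τ : R₁ →* R₂ := q₁.liftOfSurjective hq₁ ⟨q₂, hlt.le⟩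
    have hτ : τ.comp q₁ = q₂ := q₁.liftOfRightInverse_comp _ _ ⟨q₂, hlt.le⟩
    obtain ⟨g, hg₂, hg₁⟩ := SetLike.exists_of_lt hlt
    refine ⟨τ, .of_comp (g := q₁) (by rwa [← MonoidHom.coe_comp, hτ]), ?_, hτ.symm⟩
    refine Subgroup.ne_bot_iff_exists_ne_one.2 ⟨⟨q₁ g, ?_⟩, fun h => hg₁ (congrArg Subtype.val h)⟩
    rw [MonoidHom.mem_ker, ← MonoidHom.comp_apply, hτ]
    exact hg₂

theorem statement_4_general {Γ : Type*} [Group Γ] {G : Type*} [Group G] [Group.FG G]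
    (R : ℕ → GrpCat.{uG}) (η : ∀ m, G →* R m)
    (hlq : ∀ m, IsLimitQuotient Γ (η m))
    (hinc : ∀ m, QuotGT (η (m + 1)) (η m)) :
    ∃ (R' : GrpCat.{uG}) (q : G →* R'), IsLimitQuotient Γ q ∧ ∀ m, QuotGT q (η m) := by
  have := Group.FG.countable G
  have hsurj m := (hlq m).1
  choose h hstab hker using fun m => (hlq m).2
  have hlt m : (η (m + 1)).ker < (η m).ker := (quotGT_iff_ker_lt (hsurj _) (hsurj _)).1 (hinc m)
  obtain ⟨f, hf, hfker⟩ := exists_stableSeq_stableKer_eq_iInf hstab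
    (by simpa only [← hker] using antitone_nat_of_succ_le fun m => (hlt m).le)
  let q := (MonoidHom.pi η).rangeRestrict
  have hqker : q.ker = ⨅ m, (η m).ker := by rw [MonoidHom.ker_rangeRestrict, MonoidHom.ker_pi]
  refine ⟨GrpCat.of (MonoidHom.pi η).range, q,
    ⟨MonoidHom.rangeRestrict_surjective _, f, hf, by simp only [hqker, hfker, hker]⟩, fun m => ?_⟩
  rw [quotGT_iff_ker_lt (MonoidHom.rangeRestrict_surjective _) (hsurj m), hqker]
  exact (iInf_le _ (m + 1)).trans_lt (hlt m)

/-- if `Γ` has the factorization property and `R 0 < R 1 < R 2 < ⋯` is a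
strictly increasing sequence of `Γ`-limit quotients of a finitely generated group `G`
(i.e. `R (m+1) > R m` for all `m`), then there is a `Γ`-limit quotient `R'` of `G`
with `R' > R m` for every `m`. -/
theorem statement_4 {Γ : Type*} [Group Γ] (hfac : FactorizationProperty Γ)
    {G : Type*} [Group G] [Group.FG G]
    (R : ℕ → GrpCat.{uG}) (η : ∀ m, G →* R m)
    (hlq : ∀ m, IsLimitQuotient Γ (η m))
    (hinc : ∀ m, QuotGT (η (m + 1)) (η m)) :
    ∃ (R' : GrpCat.{uG}) (q : G →* R'), IsLimitQuotient Γ q ∧ ∀ m, QuotGT q (η m) :=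
  statement_4_general R η hlq hinc
end

section
/- Let Γ be a group and suppose that for every d ≥ 1, every strictly descending sequence R_1 > R_2 > ⋯ of Γ-limit quotients of the free group F_d of rank d is finite. Then every Γ-limit group is Hopfian: every surjective endomorphism of a Γ-limit group is an isomorphism. -/
open Filter

universe uG

/-!
Write a `Γ`-limit group `L` as a limit quotient `q : F_d → L` of a free group of rank `d ≥ 1`.
A surjective endomorphism `f` of `L` lifts through `q` to an endomorphism `σ` of `F_d`
(free groups are projective), and then each `fⁱ ∘ q = q ∘ σⁱ` is again a limit quotient of
`F_d`: its kernel is the stable kernel of the sequence `hₙ ∘ σⁱ`. If `f` had a nontrivial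
kernel, `f` itself would witness `fⁱ ∘ q > fⁱ⁺¹ ∘ q` for every `i`, an infinite strictly
descending chain.
-/

section

open Function

variable {Γ G F L : Type*} [Group Γ] [Group G] [Group F] [Group L]

theorem StableSeq.comp {h : ℕ → G →* Γ} (hs : StableSeq h) (r : F →* G) :
    StableSeq fun n => (h n).comp r :=
  fun x => hs (r x)

theorem stableKer_comp (h : ℕ → G →* Γ) (r : F →* G) :
    stableKer (fun n => (h n).comp r) = (stableKer h).comap r :=
  rfl

namespace IsLimitQuotient

theorem comp_of_surjective {q : G →* L} (hq : IsLimitQuotient Γ q) (r : F →* G)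
    (hr : Surjective (q.comp r)) : IsLimitQuotient Γ (q.comp r) := by
  obtain ⟨-, h, hs, hker⟩ := hq
  exact ⟨hr, _, hs.comp r, by rw [← MonoidHom.comap_ker, hker, stableKer_comp]⟩

theorem mulEquiv_comp {L' : Type*} [Group L'] {q : G →* L} (hq : IsLimitQuotient Γ q)
    (e : L ≃* L') : IsLimitQuotient Γ (e.toMonoidHom.comp q) := by
  obtain ⟨hsurj, h, hs, hker⟩ := hq
  refine ⟨e.surjective.comp hsurj, h, hs, ?_⟩
  rw [MonoidHom.ker_comp_of_injective _ _ e.injective, hker]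

theorem comp_of_semiconj {q : G →* L} (hq : IsLimitQuotient Γ q) {f : L →* L}
    (hf : Surjective f) {σ : G →* G} (hσ : q.comp σ = f.comp q) :
    IsLimitQuotient Γ (f.comp q) :=
  hσ ▸ hq.comp_of_surjective σ (hσ ▸ hf.comp hq.1)

theorem exists_quotGT_chain {q : G →* L} (hq : IsLimitQuotient Γ q) {f : L →* L}
    (hf : Surjective f) (hf_inj : ¬ Injective f) {σ : G →* G} (hσ : q.comp σ = f.comp q) :
    ∃ Q : ℕ → G →* L, (∀ i, IsLimitQuotient Γ (Q i)) ∧ ∀ i, QuotGT (Q i) (Q (i + 1)) := by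
  let Q : ℕ → G →* L := fun i => (f.comp ·)^[i] q
  have hQ_succ (i : ℕ) : Q (i + 1) = f.comp (Q i) := iterate_succ_apply' _ i q
  have hQσ (i : ℕ) : (Q i).comp σ = f.comp (Q i) := by
    induction i with
    | zero => exact hσ
    | succ i ih => rw [hQ_succ, MonoidHom.comp_assoc, ih]
  refine ⟨Q, fun i => ?_, fun i => ⟨f, hf, ?_, hQ_succ i⟩⟩
  · induction i with
    | zero => exact hq
    | succ i ih => exact hQ_succ i ▸ ih.comp_of_semiconj hf (hQσ i)
  · rwa [Ne, MonoidHom.ker_eq_bot_iff]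

end IsLimitQuotient

theorem QuotGT.mulEquiv_comp {R₁ R₂ R₁' R₂' : Type*} [Group R₁] [Group R₂] [Group R₁']
    [Group R₂'] {q₁ : G →* R₁} {q₂ : G →* R₂} (h : QuotGT q₁ q₂) (e₁ : R₁ ≃* R₁')
    (e₂ : R₂ ≃* R₂') : QuotGT (e₁.toMonoidHom.comp q₁) (e₂.toMonoidHom.comp q₂) := by
  obtain ⟨τ, hτ_surj, hτ_ker, rfl⟩ := h
  refine ⟨(e₂.toMonoidHom.comp τ).comp e₁.symm.toMonoidHom,
    (e₂.surjective.comp hτ_surj).comp e₁.symm.surjective, ?_, by ext; simp⟩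
  rw [Ne, MonoidHom.ker_eq_bot_iff] at hτ_ker ⊢
  intro hinj
  apply hτ_ker
  simpa using (e₂.symm.injective.comp hinj).comp e₁.injective

theorem FreeGroup.exists_comp_eq_of_surjective {α H K : Type*} [Group H] [Group K]
    {p : H →* K} (hp : Surjective p) (g : FreeGroup α →* K) :
    ∃ σ : FreeGroup α →* H, p.comp σ = g := by
  choose w hw using fun a => hp (g (of a))
  exact ⟨lift w, ext_hom _ _ fun a => by simp [hw]⟩

theorem Group.FG.exists_freeGroup_fin_surjective (hG : Group.FG G) :
    ∃ d, 1 ≤ d ∧ ∃ φ : FreeGroup (Fin d) →* G, Surjective φ := by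
  obtain ⟨n, ⟨P⟩⟩ := Group.fg_iff_nonempty_finite_generators.1 hG
  rcases n with _ | n
  · have : Subsingleton G := P.lift_val_surjective.subsingleton
    exact ⟨1, le_rfl, 1, fun g => ⟨1, Subsingleton.elim _ _⟩⟩
  · exact ⟨n + 1, n.succ_pos, _, P.lift_val_surjective⟩

end

/-- if for every `d ≥ 1` there is no infinite strictly descending sequence of
`Γ`-limit quotients of the free group `F_d`, then every `Γ`-limit group is Hopfian. -/
theorem statement_15 {Γ : Type*} [Group Γ]
    (hdcc : ∀ d : ℕ, 1 ≤ d →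
      ¬ ∃ (R : ℕ → GrpCat.{uG}) (q : ∀ i, FreeGroup (Fin d) →* R i),
        (∀ i, IsLimitQuotient Γ (q i)) ∧ ∀ i, QuotGT (q i) (q (i + 1))) :
    ∀ (L : Type) [Group L], IsLimitGroup Γ L →
      ∀ f : L →* L, Function.Surjective f → Function.Injective f := by
  intro L _ ⟨G, q, hG, hq⟩ f hf
  by_contra hf_inj
  obtain ⟨d, hd, π, hπ⟩ := hG.exists_freeGroup_fin_surjective
  have hqπ : IsLimitQuotient Γ (q.comp π) := hq.comp_of_surjective π (hq.1.comp hπ)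
  obtain ⟨σ, hσ⟩ := FreeGroup.exists_comp_eq_of_surjective hqπ.1 (f.comp (q.comp π))
  obtain ⟨Q, hQ_lim, hQ_gt⟩ := hqπ.exists_quotGT_chain hf hf_inj hσ
  let e : L ≃* ULift.{uG} L := MulEquiv.ulift.symm
  exact hdcc d hd ⟨fun _ => GrpCat.of (ULift.{uG} L), fun i => e.toMonoidHom.comp (Q i),
    fun i => (hQ_lim i).mulEquiv_comp e, fun i => (hQ_gt i).mulEquiv_comp e e⟩
end
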